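/- Let X = ℤ/qℤ and W : X → Y a channel. Define W⁻(y₁,y₂ | u₁) = (1/q) Σ_{u₂} W(y₁ | u₁+u₂) W(y₂ | u₂). Then for every d ≠ 0, Z_d(W⁻) ≤ 2·Z_d(W) + (q−2)·Z_max(W)², and hence Z_max(W⁻) ≤ 2·Z_max(W) + (q−2)·Z_max(W)² ≤ q·Z_max(W). -/
import Mathlib


open Finset

/-- `Z_d(V) = (1/q) ∑_x ∑_outputs √(V(·|x) V(·|x+d))` for a channel with input `ZMod q`. -/
noncomputable def Zd {q : ℕ} {B : Type*} [NeZero q] [Fintype B]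
    (V : ZMod q → B → ℝ) (d : ZMod q) : ℝ :=
  (q : ℝ)⁻¹ * ∑ x, ∑ b, Real.sqrt (V x b * V (x + d) b)

/-- `Z_max(V) = max_{d ≠ 0} Z_d(V)`. -/
noncomputable def Zmax {q : ℕ} {B : Type*} [NeZero q] [Fintype B]
    (V : ZMod q → B → ℝ) : ℝ :=
  ⨆ d : {d : ZMod q // d ≠ 0}, Zd V d.1

/-- The "minus" Arıkan transform: `W⁻(y₁,y₂ | u₁) = (1/q) ∑_{u₂} W(y₁|u₁+u₂) W(y₂|u₂)`. -/
noncomputable def Wminus {q : ℕ} {Y : Type*} [NeZero q] (W : ZMod q → Y → ℝ) :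
    ZMod q → Y × Y → ℝ :=
  fun u1 p => (q : ℝ)⁻¹ * ∑ u2, W (u1 + u2) p.1 * W u2 p.2

private lemma sqrt_sum_le' {ι : Type*} (s : Finset ι) (f : ι → ℝ) (hf : ∀ i ∈ s, 0 ≤ f i) :
    Real.sqrt (∑ i ∈ s, f i) ≤ ∑ i ∈ s, Real.sqrt (f i) := by
  rw [← Real.sqrt_sq (Finset.sum_nonneg fun i _ => Real.sqrt_nonneg _)]
  apply Real.sqrt_le_sqrt
  calc ∑ i ∈ s, f i = ∑ i ∈ s, (Real.sqrt (f i)) ^ 2 :=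
        Finset.sum_congr rfl fun i hi => (Real.sq_sqrt (hf i hi)).symm
    _ ≤ (∑ i ∈ s, Real.sqrt (f i)) ^ 2 :=
        Finset.sum_sq_le_sq_sum_of_nonneg fun i _ => Real.sqrt_nonneg _

noncomputable def Sb {q : ℕ} {B : Type*} [NeZero q] [Fintype B]
    (V : ZMod q → B → ℝ) (x e : ZMod q) : ℝ :=
  ∑ b, Real.sqrt (V x b * V (x + e) b)

private lemma reorder5 {q : ℕ} [NeZero q] {Y : Type*} [Fintype Y]
    (F : ZMod q → Y → Y → ZMod q → ZMod q → ℝ) :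
    (∑ u : ZMod q, ∑ y1 : Y, ∑ y2 : Y, ∑ c : ZMod q, ∑ v : ZMod q, F u y1 y2 c v)
      = ∑ c : ZMod q, ∑ u : ZMod q, ∑ v : ZMod q, ∑ y1 : Y, ∑ y2 : Y, F u y1 y2 c v := by
  calc (∑ u : ZMod q, ∑ y1 : Y, ∑ y2 : Y, ∑ c : ZMod q, ∑ v : ZMod q, F u y1 y2 c v)
      = ∑ u : ZMod q, ∑ y1 : Y, ∑ c : ZMod q, ∑ y2 : Y, ∑ v : ZMod q, F u y1 y2 c v :=
        Finset.sum_congr rfl fun u _ => Finset.sum_congr rfl fun y1 _ => Finset.sum_comm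
    _ = ∑ u : ZMod q, ∑ y1 : Y, ∑ c : ZMod q, ∑ v : ZMod q, ∑ y2 : Y, F u y1 y2 c v :=
        Finset.sum_congr rfl fun u _ => Finset.sum_congr rfl fun y1 _ =>
          Finset.sum_congr rfl fun c _ => Finset.sum_comm
    _ = ∑ u : ZMod q, ∑ c : ZMod q, ∑ y1 : Y, ∑ v : ZMod q, ∑ y2 : Y, F u y1 y2 c v :=
        Finset.sum_congr rfl fun u _ => Finset.sum_comm
    _ = ∑ u : ZMod q, ∑ c : ZMod q, ∑ v : ZMod q, ∑ y1 : Y, ∑ y2 : Y, F u y1 y2 c v :=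
        Finset.sum_congr rfl fun u _ => Finset.sum_congr rfl fun c _ => Finset.sum_comm
    _ = ∑ c : ZMod q, ∑ u : ZMod q, ∑ v : ZMod q, ∑ y1 : Y, ∑ y2 : Y, F u y1 y2 c v :=
        Finset.sum_comm

lemma key_bound {q : ℕ} [NeZero q] {Y : Type*} [Fintype Y] (W : ZMod q → Y → ℝ)
    (hnn : ∀ x y, 0 ≤ W x y) (d : ZMod q) :
    Zd (Wminus W) d ≤ ∑ c : ZMod q, Zd W c * Zd W (c + d) := by
  have hq : (0:ℝ) < q := by exact_mod_cast Nat.pos_of_ne_zero (NeZero.ne q)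
  -- pointwise bound
  have hpt : ∀ (u : ZMod q) (p : Y × Y),
      Real.sqrt (Wminus W u p * Wminus W (u + d) p)
        ≤ (q : ℝ)⁻¹ * ∑ c : ZMod q, ∑ v : ZMod q,
            Real.sqrt (W (u + v) p.1 * W (u + v + (c + d)) p.1)
              * Real.sqrt (W v p.2 * W (v + c) p.2) := by
    intro u p
    have hprod : Wminus W u p * Wminus W (u + d) p
        = (q : ℝ)⁻¹ ^ 2 * ∑ c : ZMod q, ∑ v : ZMod q,
            (W (u + v) p.1 * W (u + v + (c + d)) p.1) * (W v p.2 * W (v + c) p.2) := by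
      simp only [Wminus]
      rw [mul_mul_mul_comm, ← sq, Finset.sum_mul_sum]
      congr 1
      calc (∑ v : ZMod q, ∑ w : ZMod q,
              (W (u + v) p.1 * W v p.2) * (W (u + d + w) p.1 * W w p.2))
          = ∑ v : ZMod q, ∑ c : ZMod q,
              (W (u + v) p.1 * W v p.2) * (W (u + d + (v + c)) p.1 * W (v + c) p.2) := by
            refine Finset.sum_congr rfl fun v _ => ?_
            exact (Fintype.sum_equiv (Equiv.addLeft v) _ _ fun c => rfl).symm
        _ = ∑ c : ZMod q, ∑ v : ZMod q,
              (W (u + v) p.1 * W v p.2) * (W (u + d + (v + c)) p.1 * W (v + c) p.2) :=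
            Finset.sum_comm
        _ = ∑ c : ZMod q, ∑ v : ZMod q,
              (W (u + v) p.1 * W (u + v + (c + d)) p.1) * (W v p.2 * W (v + c) p.2) := by
            refine Finset.sum_congr rfl fun c _ => Finset.sum_congr rfl fun v _ => ?_
            rw [show u + d + (v + c) = u + v + (c + d) by ring]
            ring
    rw [hprod, Real.sqrt_mul (by positivity), Real.sqrt_sq (by positivity)]
    apply mul_le_mul_of_nonneg_left _ (by positivity)
    calc Real.sqrt (∑ c : ZMod q, ∑ v : ZMod q,
            (W (u + v) p.1 * W (u + v + (c + d)) p.1) * (W v p.2 * W (v + c) p.2))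
        ≤ ∑ c : ZMod q, Real.sqrt (∑ v : ZMod q,
            (W (u + v) p.1 * W (u + v + (c + d)) p.1) * (W v p.2 * W (v + c) p.2)) := by
          apply sqrt_sum_le'
          intro c _
          exact Finset.sum_nonneg fun v _ =>
            mul_nonneg (mul_nonneg (hnn _ _) (hnn _ _)) (mul_nonneg (hnn _ _) (hnn _ _))
      _ ≤ ∑ c : ZMod q, ∑ v : ZMod q, Real.sqrt
            ((W (u + v) p.1 * W (u + v + (c + d)) p.1) * (W v p.2 * W (v + c) p.2)) :=
          Finset.sum_le_sum fun c _ => sqrt_sum_le' _ _ fun v _ =>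
            mul_nonneg (mul_nonneg (hnn _ _) (hnn _ _)) (mul_nonneg (hnn _ _) (hnn _ _))
      _ = ∑ c : ZMod q, ∑ v : ZMod q,
            Real.sqrt (W (u + v) p.1 * W (u + v + (c + d)) p.1)
              * Real.sqrt (W v p.2 * W (v + c) p.2) := by
          refine Finset.sum_congr rfl fun c _ => Finset.sum_congr rfl fun v _ => ?_
          exact Real.sqrt_mul (mul_nonneg (hnn _ _) (hnn _ _)) _
  calc Zd (Wminus W) d
      ≤ (q : ℝ)⁻¹ * ∑ u : ZMod q, ∑ p : Y × Y,
          ((q : ℝ)⁻¹ * ∑ c : ZMod q, ∑ v : ZMod q,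
            Real.sqrt (W (u + v) p.1 * W (u + v + (c + d)) p.1)
              * Real.sqrt (W v p.2 * W (v + c) p.2)) := by
        apply mul_le_mul_of_nonneg_left _ (by positivity)
        exact Finset.sum_le_sum fun u _ => Finset.sum_le_sum fun p _ => hpt u p
    _ = ∑ c : ZMod q, Zd W c * Zd W (c + d) := by
        simp only [← Finset.mul_sum, Fintype.sum_prod_type]
        rw [reorder5 (fun u y1 y2 c v =>
          Real.sqrt (W (u + v) y1 * W (u + v + (c + d)) y1)
            * Real.sqrt (W v y2 * W (v + c) y2))]
        rw [Finset.mul_sum, Finset.mul_sum]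
        refine Finset.sum_congr rfl fun c _ => ?_
        have h1 : ∀ u v : ZMod q,
            (∑ y1 : Y, ∑ y2 : Y, Real.sqrt (W (u + v) y1 * W (u + v + (c + d)) y1)
              * Real.sqrt (W v y2 * W (v + c) y2))
            = Sb W (u + v) (c + d) * Sb W v c := by
          intro u v
          rw [Sb, Sb, Finset.sum_mul_sum]
        simp only [h1]
        have h2 : ∀ v : ZMod q, (∑ u : ZMod q, Sb W (u + v) (c + d) * Sb W v c)
            = (∑ x : ZMod q, Sb W x (c + d)) * Sb W v c := by
          intro v
          rw [Finset.sum_mul]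
          exact Fintype.sum_equiv (Equiv.addRight v) _ _ fun u => rfl
        rw [Finset.sum_comm]
        simp only [h2]
        rw [← Finset.mul_sum]
        simp only [Zd, Sb]
        ring

section basic
variable {q : ℕ} [NeZero q] {B : Type*} [Fintype B] (V : ZMod q → B → ℝ)

lemma Zd_eq (e : ZMod q) : Zd V e = (q : ℝ)⁻¹ * ∑ x, Sb V x e := rfl

lemma Sb_nonneg (x e : ZMod q) : 0 ≤ Sb V x e :=
  Finset.sum_nonneg fun _ _ => Real.sqrt_nonneg _

lemma Zd_nonneg (e : ZMod q) : 0 ≤ Zd V e :=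
  mul_nonneg (by positivity) (Finset.sum_nonneg fun _ _ => Sb_nonneg V _ _)

lemma Zd_le_one (hnn : ∀ x y, 0 ≤ V x y) (hsum : ∀ x, ∑ y, V x y = 1) (e : ZMod q) :
    Zd V e ≤ 1 := by
  have hq : (0:ℝ) < q := by exact_mod_cast Nat.pos_of_ne_zero (NeZero.ne q)
  have h1 : ∀ x : ZMod q, Sb V x e ≤ 1 := by
    intro x
    calc Sb V x e = ∑ b, Real.sqrt (V x b) * Real.sqrt (V (x + e) b) := by
          refine Finset.sum_congr rfl fun b _ => ?_
          exact Real.sqrt_mul (hnn x b) _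
      _ ≤ Real.sqrt (∑ b, V x b) * Real.sqrt (∑ b, V (x + e) b) :=
          Real.sum_sqrt_mul_sqrt_le _ (hnn x) (hnn (x + e))
      _ = 1 := by rw [hsum, hsum, Real.sqrt_one, one_mul]
  calc Zd V e ≤ (q : ℝ)⁻¹ * ∑ _x : ZMod q, (1:ℝ) := by
        rw [Zd_eq]
        exact mul_le_mul_of_nonneg_left (Finset.sum_le_sum fun x _ => h1 x) (by positivity)
    _ = 1 := by
        simp [ZMod.card]

lemma Zd_zero (hnn : ∀ x y, 0 ≤ V x y) (hsum : ∀ x, ∑ y, V x y = 1) :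
    Zd V 0 = 1 := by
  have hq : (0:ℝ) < q := by exact_mod_cast Nat.pos_of_ne_zero (NeZero.ne q)
  rw [Zd_eq]
  have : ∀ x : ZMod q, Sb V x 0 = 1 := by
    intro x
    unfold Sb
    simp only [add_zero]
    rw [← hsum x]
    exact Finset.sum_congr rfl fun b _ => Real.sqrt_mul_self (hnn x b)
  simp only [this]
  simp [ZMod.card]

lemma Zd_neg (e : ZMod q) : Zd V (-e) = Zd V e := by
  rw [Zd_eq, Zd_eq]
  congr 1
  refine Fintype.sum_equiv (Equiv.subRight e) _ _ fun x => ?_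
  unfold Sb
  refine Finset.sum_congr rfl fun b _ => ?_
  simp only [Equiv.subRight_apply, sub_add_cancel, ← sub_eq_add_neg]
  rw [mul_comm]
end basic


section Zmaxlemmas
variable {q : ℕ} [NeZero q] {B : Type*} [Fintype B]

lemma le_Zmax' (hq : 2 ≤ q) (V : ZMod q → B → ℝ) {d : ZMod q} (hd : d ≠ 0) :
    Zd V d ≤ Zmax V := by
  haveI : Fact (1 < q) := ⟨hq⟩
  exact le_ciSup (f := fun d : {d : ZMod q // d ≠ 0} => Zd V d.1)
    (Set.Finite.bddAbove (Set.finite_range _)) ⟨d, hd⟩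

lemma Zmax_nonneg' (hq : 2 ≤ q) (V : ZMod q → B → ℝ) : 0 ≤ Zmax V := by
  haveI : Fact (1 < q) := ⟨hq⟩
  exact (Zd_nonneg V 1).trans (le_Zmax' hq V one_ne_zero)

lemma Zmax_le' (hq : 2 ≤ q) (V : ZMod q → B → ℝ) {a : ℝ}
    (h : ∀ d : ZMod q, d ≠ 0 → Zd V d ≤ a) : Zmax V ≤ a := by
  haveI : Fact (1 < q) := ⟨hq⟩
  haveI : Nonempty {d : ZMod q // d ≠ 0} := ⟨⟨1, one_ne_zero⟩⟩
  exact ciSup_le fun d => h d.1 d.2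

end Zmaxlemmas


/-- For every `d ≠ 0`, `Z_d(W⁻) ≤ 2 Z_d(W) + (q-2) Z_max(W)²`, and hence
`Z_max(W⁻) ≤ 2 Z_max(W) + (q-2) Z_max(W)² ≤ q Z_max(W)`. -/
theorem Zd_Wminus_le {q : ℕ} [NeZero q] (hq : 2 ≤ q)
    {Y : Type*} [Fintype Y] (W : ZMod q → Y → ℝ)
    (hnn : ∀ x y, 0 ≤ W x y) (hsum : ∀ x, ∑ y, W x y = 1) :
    (∀ d : ZMod q, d ≠ 0 →
        Zd (Wminus W) d ≤ 2 * Zd W d + ((q : ℝ) - 2) * Zmax W ^ 2) ∧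
      Zmax (Wminus W) ≤ 2 * Zmax W + ((q : ℝ) - 2) * Zmax W ^ 2 ∧
        2 * Zmax W + ((q : ℝ) - 2) * Zmax W ^ 2 ≤ (q : ℝ) * Zmax W := by
  haveI : Fact (1 < q) := ⟨hq⟩
  have hq2 : (2 : ℝ) ≤ (q : ℝ) := by exact_mod_cast hq
  have hZm0 : 0 ≤ Zmax W := Zmax_nonneg' hq W
  have hZm1 : Zmax W ≤ 1 := Zmax_le' hq W fun d _ => Zd_le_one W hnn hsum d
  have part1 : ∀ d : ZMod q, d ≠ 0 →
      Zd (Wminus W) d ≤ 2 * Zd W d + ((q : ℝ) - 2) * Zmax W ^ 2 := by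
    intro d hd
    refine (key_bound W hnn d).trans ?_
    have hne : (0 : ZMod q) ≠ -d := fun h => hd (by simpa using h.symm)
    have hsub : ({0, -d} : Finset (ZMod q)) ⊆ univ := Finset.subset_univ _
    rw [← Finset.sum_sdiff hsub, Finset.sum_pair hne]
    have h0 : Zd W 0 * Zd W (0 + d) = Zd W d := by
      rw [Zd_zero W hnn hsum, zero_add, one_mul]
    have hd' : Zd W (-d) * Zd W (-d + d) = Zd W d := by
      rw [neg_add_cancel, Zd_zero W hnn hsum, mul_one, Zd_neg]
    rw [h0, hd']
    have hcard : (univ \ ({0, -d} : Finset (ZMod q))).card = q - 2 := by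
      rw [Finset.card_sdiff_of_subset hsub, Finset.card_pair hne, Finset.card_univ, ZMod.card]
    have hbnd : ∑ c ∈ univ \ ({0, -d} : Finset (ZMod q)), Zd W c * Zd W (c + d)
        ≤ ((q : ℝ) - 2) * Zmax W ^ 2 := by
      calc ∑ c ∈ univ \ ({0, -d} : Finset (ZMod q)), Zd W c * Zd W (c + d)
          ≤ ∑ _c ∈ univ \ ({0, -d} : Finset (ZMod q)), Zmax W ^ 2 := by
            refine Finset.sum_le_sum fun c hc => ?_
            simp only [Finset.mem_sdiff, Finset.mem_insert, Finset.mem_singleton] at hc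
            push_neg at hc
            obtain ⟨-, hc0, hcd⟩ := hc
            have hcd0 : c + d ≠ 0 := fun h => hcd (by linear_combination (norm := ring_nf) h)
            rw [sq]
            exact mul_le_mul (le_Zmax' hq W hc0) (le_Zmax' hq W hcd0)
              (Zd_nonneg W _) hZm0
        _ = ((q : ℝ) - 2) * Zmax W ^ 2 := by
            rw [Finset.sum_const, hcard, nsmul_eq_mul, Nat.cast_sub hq]
            norm_num
    linarith
  refine ⟨part1, ?_, ?_⟩
  · refine Zmax_le' hq (Wminus W) fun d hd => (part1 d hd).trans ?_
    have : Zd W d ≤ Zmax W := le_Zmax' hq W hd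
    linarith
  · have h := mul_nonneg (mul_nonneg (sub_nonneg.2 hq2) hZm0) (sub_nonneg.2 hZm1)
    nlinarith [h]
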